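/- Let Ã ∈ ℝ^{N×N}, b̃ ∈ ℝ^N, x₀ ∈ ℝ^N, k_h ≥ 1, and let Q ∈ ℝ^{N×N} be symmetric. Define the model predictive cost C(𝛔) = Σ_{k=1}^{k_h} x(k)ᵀ Q x(k) for 𝛔 = (σ(0),…,σ(k_h−1)) ∈ {−1,1}^{N k_h}, where x(0) = x₀ and x(k+1) = x(k) + Ã σ(k) + b̃. Then there exist coefficients J ∈ ℝ^{n×n} with n = N k_h (supported on pairs i < j), a vector h ∈ ℝ^n, and a constant c₀ ∈ ℝ, all independent of 𝛔, such that C(𝛔) = Σ_{i<j} J_{ij} 𝛔_i 𝛔_j + Σ_i h_i 𝛔_i + c₀ for all 𝛔 ∈ {−1,1}^n; explicitly, with M = 𝐀ᵀ 𝐐 𝐀 and w = 2 𝐀ᵀ 𝐐 (𝐈 x₀ + 𝐛), one may take J_{ij} = M_{ij} + M_{ji} for i < j, h = w, and c₀ = Σ_i M_{ii} + (𝐈 x₀ + 𝐛)ᵀ 𝐐 (𝐈 x₀ + 𝐛). Consequently, a configuration 𝛔* minimizes C over {−1,1}^{N k_h} if and only if it minimizes the Ising energy Σ_{i<j} J_{ij}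 𝛔_i 𝛔_j + Σ_i h_i 𝛔_i over {−1,1}^{N k_h}. -/
import Mathlib


open Matrix

open Finset in
lemma quad_split' {n : ℕ} (M : Matrix (Fin n) (Fin n) ℝ) (σ : Fin n → ℝ)
    (hσ : ∀ i, σ i * σ i = 1) :
    σ ⬝ᵥ M.mulVec σ =
      (∑ pq ∈ Finset.univ.filter (fun pq : Fin n × Fin n => pq.1 < pq.2),
        (M pq.1 pq.2 + M pq.2 pq.1) * σ pq.1 * σ pq.2) + ∑ i, M i i := by
  classical
  have hdot : σ ⬝ᵥ M.mulVec σ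
      = ∑ p : Fin n × Fin n, σ p.1 * M p.1 p.2 * σ p.2 := by
    rw [Fintype.sum_prod_type]
    simp only [dotProduct, mulVec, dotProduct, Finset.mul_sum]
    apply Finset.sum_congr rfl
    intro i _
    apply Finset.sum_congr rfl
    intro j _
    ring
  rw [hdot]
  rw [← Finset.sum_filter_add_sum_filter_not Finset.univ (fun p : Fin n × Fin n => p.1 < p.2)]
  rw [← Finset.sum_filter_add_sum_filter_not
      (Finset.univ.filter (fun p : Fin n × Fin n => ¬ p.1 < p.2))
      (fun p : Fin n × Fin n => p.2 < p.1)]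
  have h1 : (Finset.univ.filter (fun p : Fin n × Fin n => ¬ p.1 < p.2)).filter
      (fun p => p.2 < p.1) = Finset.univ.filter (fun p : Fin n × Fin n => p.2 < p.1) := by
    rw [Finset.filter_filter]
    apply Finset.filter_congr
    intro p _
    constructor
    · exact fun h => h.2
    · exact fun h => ⟨asymm h, h⟩
  have h2 : (Finset.univ.filter (fun p : Fin n × Fin n => ¬ p.1 < p.2)).filter
      (fun p => ¬ p.2 < p.1) = Finset.univ.filter (fun p : Fin n × Fin n => p.1 = p.2) := by
    rw [Finset.filter_filter]
    apply Finset.filter_congr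
    intro p _
    simp only [not_lt]
    constructor
    · exact fun h => le_antisymm h.2 h.1
    · exact fun h => ⟨le_of_eq h.symm, le_of_eq h⟩
  rw [h1, h2]
  have h3 : ∑ p ∈ Finset.univ.filter (fun p : Fin n × Fin n => p.2 < p.1),
      σ p.1 * M p.1 p.2 * σ p.2
      = ∑ p ∈ Finset.univ.filter (fun p : Fin n × Fin n => p.1 < p.2),
        σ p.2 * M p.2 p.1 * σ p.1 := by
    apply Finset.sum_nbij' (fun p => Prod.swap p) (fun p => Prod.swap p) <;>
      simp [Prod.swap]
  have h4 : ∑ p ∈ Finset.univ.filter (fun p : Fin n × Fin n => p.1 = p.2),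
      σ p.1 * M p.1 p.2 * σ p.2 = ∑ i, M i i := by
    rw [Finset.sum_filter]
    rw [Fintype.sum_prod_type]
    apply Finset.sum_congr rfl
    intro i _
    simp only []
    have : (∑ y : Fin n, if i = y then σ i * M i y * σ y else 0) = σ i * M i i * σ i := by
      rw [Finset.sum_ite_eq]
      simp
    rw [this]
    calc σ i * M i i * σ i = M i i * (σ i * σ i) := by ring
      _ = M i i := by rw [hσ i, mul_one]
  rw [h3, h4]
  have h5 : ∑ p ∈ Finset.univ.filter (fun p : Fin n × Fin n => p.1 < p.2),
      σ p.1 * M p.1 p.2 * σ p.2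
      + (∑ p ∈ Finset.univ.filter (fun p : Fin n × Fin n => p.1 < p.2),
        σ p.2 * M p.2 p.1 * σ p.1)
      = ∑ pq ∈ Finset.univ.filter (fun pq : Fin n × Fin n => pq.1 < pq.2),
        (M pq.1 pq.2 + M pq.2 pq.1) * σ pq.1 * σ pq.2 := by
    rw [← Finset.sum_add_distrib]
    exact Finset.sum_congr rfl fun p _ => by ring
  rw [← add_assoc, h5]


/-- The model predictive cost
`C(𝛔) = Σ_{k=1}^{k_h} x(k)ᵀ Q x(k)` (with `x(0) = x₀`, `x(k+1) = x(k) + Ã σ(k) + b̃`),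
viewed as a function of the stacked binary configuration `𝛔 ∈ {−1,1}^{N k_h}`
(indexed by `Fin k_h × Fin N`, identified with `Fin (k_h·N)` via `finProdFinEquiv`),
coincides with an Ising energy: with `M = 𝐀ᵀ 𝐐 𝐀` and `w = 2 𝐀ᵀ 𝐐 (𝐈 x₀ + 𝐛)` one may
take `J_{ij} = M_{ij} + M_{ji}` for `i < j`, `h = w`, and
`c₀ = Σ_i M_{ii} + (𝐈 x₀ + 𝐛)ᵀ 𝐐 (𝐈 x₀ + 𝐛)`, so that
`C(𝛔) = Σ_{i<j} J_{ij} 𝛔_i 𝛔_j + Σ_i h_i 𝛔_i + c₀` for all `𝛔 ∈ {−1,1}^{N k_h}`.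
Consequently, `𝛔*` minimizes `C` over `{−1,1}^{N k_h}` iff it minimizes the Ising
energy `Σ_{i<j} J_{ij} 𝛔_i 𝛔_j + Σ_i h_i 𝛔_i`. -/
theorem mpc_cost_is_ising_problem {N kh : ℕ} (hkh : 1 ≤ kh)
    (Atil Q : Matrix (Fin N) (Fin N) ℝ) (hQ : Q.IsSymm)
    (btil x0 : Fin N → ℝ)
    (C : ((Fin kh × Fin N) → ℝ) → ℝ)
    (hC : ∀ (σ : (Fin kh × Fin N) → ℝ) (x : ℕ → Fin N → ℝ), x 0 = x0 →
      (∀ (k : ℕ) (hk : k < kh),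
        x (k + 1) = x k + Atil.mulVec (fun i => σ (⟨k, hk⟩, i)) + btil) →
      C σ = ∑ k ∈ Finset.range kh, x (k + 1) ⬝ᵥ Q.mulVec (x (k + 1)))
    (bI : Matrix (Fin kh × Fin N) (Fin N) ℝ)
    (hbI : ∀ (p : Fin kh × Fin N) (j : Fin N), bI p j = if p.2 = j then 1 else 0)
    (bA : Matrix (Fin kh × Fin N) (Fin kh × Fin N) ℝ)
    (hbA : ∀ p q : Fin kh × Fin N, bA p q = if q.1 ≤ p.1 then Atil p.2 q.2 else 0)
    (bb : Fin kh × Fin N → ℝ)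
    (hbb : ∀ p : Fin kh × Fin N, bb p = ((p.1 : ℕ) + 1 : ℝ) * btil p.2)
    (bQ : Matrix (Fin kh × Fin N) (Fin kh × Fin N) ℝ)
    (hbQ : ∀ p q : Fin kh × Fin N, bQ p q = if p.1 = q.1 then Q p.2 q.2 else 0)
    (M : Matrix (Fin kh × Fin N) (Fin kh × Fin N) ℝ) (hM : M = bAᵀ * bQ * bA)
    (w : (Fin kh × Fin N) → ℝ)
    (hw : w = (2 : ℝ) • (bAᵀ * bQ).mulVec (bI.mulVec x0 + bb))
    (J : Fin (kh * N) → Fin (kh * N) → ℝ)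
    (hJ : ∀ a b : Fin (kh * N), a < b →
      J a b = M (finProdFinEquiv.symm a) (finProdFinEquiv.symm b)
            + M (finProdFinEquiv.symm b) (finProdFinEquiv.symm a))
    (h : Fin (kh * N) → ℝ) (hh : ∀ a : Fin (kh * N), h a = w (finProdFinEquiv.symm a))
    (c0 : ℝ)
    (hc0 : c0 = (∑ p : Fin kh × Fin N, M p p)
      + (bI.mulVec x0 + bb) ⬝ᵥ bQ.mulVec (bI.mulVec x0 + bb)) :
    (∀ σ : (Fin kh × Fin N) → ℝ, (∀ p, σ p = 1 ∨ σ p = -1) →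
      C σ =
        (∑ pq ∈ Finset.univ.filter
            (fun pq : Fin (kh * N) × Fin (kh * N) => pq.1 < pq.2),
          J pq.1 pq.2 * σ (finProdFinEquiv.symm pq.1) * σ (finProdFinEquiv.symm pq.2))
        + (∑ a : Fin (kh * N), h a * σ (finProdFinEquiv.symm a)) + c0) ∧
    (∀ σopt : (Fin kh × Fin N) → ℝ, (∀ p, σopt p = 1 ∨ σopt p = -1) →
      ((∀ σ : (Fin kh × Fin N) → ℝ, (∀ p, σ p = 1 ∨ σ p = -1) → C σopt ≤ C σ) ↔
        (∀ σ : (Fin kh × Fin N) → ℝ, (∀ p, σ p = 1 ∨ σ p = -1) →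
          (∑ pq ∈ Finset.univ.filter
              (fun pq : Fin (kh * N) × Fin (kh * N) => pq.1 < pq.2),
            J pq.1 pq.2 * σopt (finProdFinEquiv.symm pq.1)
              * σopt (finProdFinEquiv.symm pq.2))
            + (∑ a : Fin (kh * N), h a * σopt (finProdFinEquiv.symm a)) ≤
          (∑ pq ∈ Finset.univ.filter
              (fun pq : Fin (kh * N) × Fin (kh * N) => pq.1 < pq.2),
            J pq.1 pq.2 * σ (finProdFinEquiv.symm pq.1)
              * σ (finProdFinEquiv.symm pq.2))
            + (∑ a : Fin (kh * N), h a * σ (finProdFinEquiv.symm a))))) := by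
  classical
  set u : Fin kh × Fin N → ℝ := bI.mulVec x0 + bb with hu
  -- block-diagonal structure of bQ
  have hbQsymm : bQᵀ = bQ := by
    ext p q
    simp only [transpose_apply, hbQ]
    by_cases hpq : p.1 = q.1
    · simp [hpq, hQ.apply]
    · rw [if_neg (fun hq : q.1 = p.1 => hpq hq.symm), if_neg hpq]
  -- Step C: block structure
  have hblock : ∀ v : Fin kh × Fin N → ℝ,
      v ⬝ᵥ bQ.mulVec v
        = ∑ k : Fin kh, (fun i => v (k, i)) ⬝ᵥ Q.mulVec (fun i => v (k, i)) := by
    intro v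
    simp only [dotProduct, mulVec, dotProduct]
    rw [Fintype.sum_prod_type]
    apply Finset.sum_congr rfl
    intro k _
    apply Finset.sum_congr rfl
    intro i _
    congr 1
    rw [Fintype.sum_prod_type, Finset.sum_comm]
    apply Finset.sum_congr rfl
    intro j _
    simp only [hbQ]
    rw [Finset.sum_eq_single k]
    · simp
    · intro l _ hl; simp [Ne.symm hl]
    · simp
  -- Step A: cost identity
  have hcost : ∀ σ : (Fin kh × Fin N) → ℝ,
      C σ = (bA.mulVec σ + u) ⬝ᵥ bQ.mulVec (bA.mulVec σ + u) := by
    intro σ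
    set F : ℕ → (Fin N → ℝ) := fun j =>
      if hj : j < kh then Atil.mulVec (fun i => σ (⟨j, hj⟩, i)) + btil else 0 with hF
    set x : ℕ → Fin N → ℝ := fun k => fun i => x0 i + ∑ j ∈ Finset.range k, F j i with hx
    have hx0 : x 0 = x0 := by funext i; simp [hx]
    have hrec : ∀ (k : ℕ) (hk : k < kh),
        x (k + 1) = x k + Atil.mulVec (fun i => σ (⟨k, hk⟩, i)) + btil := by
      intro k hk
      funext i
      simp only [hx, Pi.add_apply, Finset.sum_range_succ, hF, dif_pos hk]
      ring
    rw [hC σ x hx0 hrec, hblock]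
    -- switch sum over range kh to Fin kh
    rw [← Fin.sum_univ_eq_sum_range (fun k => x (k + 1) ⬝ᵥ Q.mulVec (x (k + 1))) kh]
    apply Finset.sum_congr rfl
    intro k _
    have hxv : ∀ i : Fin N, x ((k : ℕ) + 1) i = (bA.mulVec σ + u) (k, i) := by
      intro i
      have hk : (k : ℕ) < kh := k.isLt
      -- RHS computation
      have hI : bI.mulVec x0 (k, i) = x0 i := by
        simp only [mulVec, dotProduct, hbI]
        rw [Finset.sum_eq_single i]
        · simp
        · intro b _ hb; rw [if_neg (fun hh' => hb hh'.symm), zero_mul]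
        · simp
      set G : ℕ → ℝ := fun j =>
        if hj : j < kh then (Atil.mulVec (fun i' => σ (⟨j, hj⟩, i'))) i else 0 with hG
      have hA : bA.mulVec σ (k, i) = ∑ j ∈ Finset.range ((k : ℕ) + 1), G j := by
        simp only [mulVec, dotProduct, hbA]
        rw [Fintype.sum_prod_type]
        have step1 : ∀ l : Fin kh,
            (∑ j2 : Fin N, (if l ≤ k then Atil i j2 else 0) * σ (l, j2))
            = if (l : ℕ) ≤ (k : ℕ) then G (l : ℕ) else 0 := by
          intro l
          by_cases hl : l ≤ k
          · rw [if_pos (Fin.le_def.mp hl)]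
            simp only [if_pos hl, hG, dif_pos l.isLt]
            simp [mulVec, dotProduct, Fin.eta]
          · rw [if_neg (fun hln => hl (Fin.le_def.mpr hln))]
            simp [hl]
        rw [Finset.sum_congr rfl (fun l _ => step1 l)]
        rw [Fin.sum_univ_eq_sum_range (fun j => if j ≤ (k : ℕ) then G j else 0) kh]
        rw [← Finset.sum_filter]
        congr 1
        ext j
        simp only [Finset.mem_filter, Finset.mem_range, Nat.lt_succ_iff]
        omega
      have hL : x ((k : ℕ) + 1) i = x0 i
          + (∑ j ∈ Finset.range ((k : ℕ) + 1), F j i) := rfl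
      have hsum : (∑ j ∈ Finset.range ((k : ℕ) + 1), F j i)
          = (∑ j ∈ Finset.range ((k : ℕ) + 1), G j) + ((k : ℕ) + 1 : ℝ) * btil i := by
        have : ∀ j ∈ Finset.range ((k : ℕ) + 1), F j i = G j + btil i := by
          intro j hj
          have hjkh : j < kh := by have := Finset.mem_range.mp hj; omega
          simp only [hF, hG, dif_pos hjkh, Pi.add_apply]
        rw [Finset.sum_congr rfl this, Finset.sum_add_distrib, Finset.sum_const,
          Finset.card_range, nsmul_eq_mul]
        push_cast
        ring
      rw [hL, hsum, ← hA]
      have : (bA.mulVec σ + u) (k, i) = bA.mulVec σ (k, i) + (bI.mulVec x0 (k, i) + bb (k, i)) := by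
        simp [hu]
      rw [this, hI, hbb]
      push_cast
      ring
    have hfun : x ((k : ℕ) + 1) = fun i => (bA.mulVec σ + u) (k, i) := funext hxv
    rw [hfun]
  -- Step D: expansion
  have hexp : ∀ σ : (Fin kh × Fin N) → ℝ,
      (bA.mulVec σ + u) ⬝ᵥ bQ.mulVec (bA.mulVec σ + u)
        = σ ⬝ᵥ M.mulVec σ + w ⬝ᵥ σ + u ⬝ᵥ bQ.mulVec u := by
    intro σ
    have key : ∀ z : Fin kh × Fin N → ℝ,
        σ ⬝ᵥ bAᵀ.mulVec z = bA.mulVec σ ⬝ᵥ z := by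
      intro z
      rw [dotProduct_mulVec, vecMul_transpose]
    have t3 : u ⬝ᵥ bQ.mulVec (bA.mulVec σ) = bA.mulVec σ ⬝ᵥ bQ.mulVec u := by
      rw [dotProduct_mulVec]
      rw [show vecMul u bQ = bQ.mulVec u by rw [← hbQsymm, vecMul_transpose, hbQsymm]]
      rw [dotProduct_comm]
    have t1 : bA.mulVec σ ⬝ᵥ bQ.mulVec (bA.mulVec σ) = σ ⬝ᵥ M.mulVec σ := by
      rw [hM, ← mulVec_mulVec, ← mulVec_mulVec, key]
    have tw : w ⬝ᵥ σ = 2 * (bA.mulVec σ ⬝ᵥ bQ.mulVec u) := by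
      rw [hw, smul_dotProduct, ← mulVec_mulVec, dotProduct_comm, key]
      simp [hu]
    rw [mulVec_add, add_dotProduct, dotProduct_add, dotProduct_add, t3, t1, tw]
    ring
  -- binary squares
  have hsq : ∀ σ : (Fin kh × Fin N) → ℝ, (∀ p, σ p = 1 ∨ σ p = -1) →
      ∀ p, σ p * σ p = 1 := by
    intro σ hσ p
    rcases hσ p with h1 | h1 <;> rw [h1] <;> ring
  -- Step E: Ising form
  have main : ∀ σ : (Fin kh × Fin N) → ℝ, (∀ p, σ p = 1 ∨ σ p = -1) →
      C σ =
        (∑ pq ∈ Finset.univ.filter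
            (fun pq : Fin (kh * N) × Fin (kh * N) => pq.1 < pq.2),
          J pq.1 pq.2 * σ (finProdFinEquiv.symm pq.1) * σ (finProdFinEquiv.symm pq.2))
        + (∑ a : Fin (kh * N), h a * σ (finProdFinEquiv.symm a)) + c0 := by
    intro σ hσ
    rw [hcost, hexp]
    set e := (finProdFinEquiv : Fin kh × Fin N ≃ Fin (kh * N)) with he
    set M' : Matrix (Fin (kh * N)) (Fin (kh * N)) ℝ := M.submatrix e.symm e.symm with hM'
    set σ' : Fin (kh * N) → ℝ := fun a => σ (e.symm a) with hσ'
    have htr : σ ⬝ᵥ M.mulVec σ = σ' ⬝ᵥ M'.mulVec σ' := by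
      simp only [dotProduct, mulVec, dotProduct, hM', hσ', submatrix_apply]
      rw [← Equiv.sum_comp e.symm
        (fun p => σ p * ∑ q : Fin kh × Fin N, M p q * σ q)]
      apply Finset.sum_congr rfl
      intro a _
      congr 1
      rw [← Equiv.sum_comp e.symm (fun q => M (e.symm a) q * σ q)]
    have hquad := quad_split' M' σ' (fun a => hsq σ hσ (e.symm a))
    rw [htr, hquad]
    have hpair : (∑ pq ∈ Finset.univ.filter
          (fun pq : Fin (kh * N) × Fin (kh * N) => pq.1 < pq.2),
        (M' pq.1 pq.2 + M' pq.2 pq.1) * σ' pq.1 * σ' pq.2)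
        = (∑ pq ∈ Finset.univ.filter
            (fun pq : Fin (kh * N) × Fin (kh * N) => pq.1 < pq.2),
          J pq.1 pq.2 * σ (e.symm pq.1) * σ (e.symm pq.2)) := by
      apply Finset.sum_congr rfl
      intro pq hpq
      rw [Finset.mem_filter] at hpq
      rw [hJ pq.1 pq.2 hpq.2]
      rfl
    have hdiag : (∑ a : Fin (kh * N), M' a a) = ∑ p : Fin kh × Fin N, M p p := by
      exact Equiv.sum_comp e.symm (fun p => M p p)
    have hlin : w ⬝ᵥ σ = ∑ a : Fin (kh * N), h a * σ (e.symm a) := by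
      rw [dotProduct]
      rw [← Equiv.sum_comp e.symm (fun p => w p * σ p)]
      exact Finset.sum_congr rfl fun a _ => by rw [hh]
    rw [hpair, hdiag, hlin, hc0]
    ring
  refine ⟨main, ?_⟩
  intro σopt hσopt
  constructor
  · intro hle σ hσ
    have := hle σ hσ
    rw [main σopt hσopt, main σ hσ] at this
    linarith
  · intro hle σ hσ
    rw [main σopt hσopt, main σ hσ]
    have := hle σ hσ
    linarith
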